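/- arXiv:2605.31184 — 2 statements merged into one kernel-verified Lean document; each statement's English description precedes it below -/
import Mathlib

section
/- Let (ε_{i,j})_{i ≥ 1, j ≥ 1} be a doubly indexed family of i.i.d. standard Laplace random variables and let (k_n)_{n ≥ 1} be positive integers with k_n ≥ 2 for all n and k_n/√n → 0 as n → ∞. Then Σ_{j=1}^{k_n} | (1/n) Σ_{i=1}^n ε_{i,j} | → 0 almost surely as n → ∞. -/
/-!
Put `s = 1/√n` and let `S_j = ∑_{i<n} ε (i, j)` be the column sums. Expanding
`∏_j (e^{s S_j} + e^{-s S_j})` bounds `exp (s ∑_{j<K} |S_j|)` by a sum of `2^K` exponentials of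
signed sums `s ∑_j ±S_j`, each a sum of `nK` independent Laplace variables with mgf
`(2 / (2 - 1/n))^{nK} ≤ 2^K` (Bernoulli). Chernoff's bound gives
`P (∑_j |S_j| ≥ n t) ≤ e^{-√n t} 4^K`, which is `≤ e^{-t√n/2}` once `K log 4 ≤ t√n/2`; since
`k_n = o(√n)` this holds eventually, the bounds are summable, and Borel–Cantelli concludes.
-/

open MeasureTheory Set Filter

/-- The standard Laplace distribution on `ℝ` (centred, unit variance), with density
`x ↦ (1/√2) e^{−√2|x|}` with respect to Lebesgue measure. -/
noncomputable def stdLaplace : Measure ℝ :=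
  volume.withDensity fun x => ENNReal.ofReal ((Real.sqrt 2)⁻¹ * Real.exp (-(Real.sqrt 2 * |x|)))

open Real ProbabilityTheory Finset
open scoped Topology ENNReal Nat

noncomputable def laplacePDF (x : ℝ) : ℝ := (√2)⁻¹ * exp (-(√2 * |x|))

lemma stdLaplace_eq_withDensity_laplacePDF :
    stdLaplace = volume.withDensity fun x => ENNReal.ofReal (laplacePDF x) := rfl

lemma exp_mul_mul_laplacePDF_of_nonpos {u x : ℝ} (hx : x ≤ 0) :
    exp (u * x) * laplacePDF x = (√2)⁻¹ * exp ((√2 + u) * x) := by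
  rw [laplacePDF, abs_of_nonpos hx, mul_left_comm, ← exp_add]
  ring_nf

lemma exp_mul_mul_laplacePDF_of_nonneg {u x : ℝ} (hx : 0 ≤ x) :
    exp (u * x) * laplacePDF x = (√2)⁻¹ * exp ((u - √2) * x) := by
  rw [laplacePDF, abs_of_nonneg hx, mul_left_comm, ← exp_add]
  ring_nf

lemma laplacePDF_nonneg (x : ℝ) : 0 ≤ laplacePDF x := by
  unfold laplacePDF
  positivity

lemma continuous_laplacePDF : Continuous laplacePDF := by
  unfold laplacePDF
  fun_prop

section StdLaplace

variable {u : ℝ}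

lemma integrableOn_exp_mul_mul_laplacePDF_Iic (hu : -√2 < u) :
    IntegrableOn (fun x => exp (u * x) * laplacePDF x) (Iic 0) :=
  IntegrableOn.congr_fun ((integrableOn_exp_mul_Iic (a := √2 + u) (by linarith) 0).const_mul _)
    (fun _ hx => (exp_mul_mul_laplacePDF_of_nonpos hx).symm) measurableSet_Iic

lemma integrableOn_exp_mul_mul_laplacePDF_Ioi (hu : u < √2) :
    IntegrableOn (fun x => exp (u * x) * laplacePDF x) (Ioi 0) :=
  IntegrableOn.congr_fun ((integrableOn_exp_mul_Ioi (a := u - √2) (by linarith) 0).const_mul _)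
    (fun _ hx => (exp_mul_mul_laplacePDF_of_nonneg (le_of_lt hx)).symm) measurableSet_Ioi

lemma integrable_exp_mul_mul_laplacePDF (hu : |u| < √2) :
    Integrable fun x => exp (u * x) * laplacePDF x := by
  rw [← integrableOn_univ, ← Iic_union_Ioi (a := 0)]
  exact (integrableOn_exp_mul_mul_laplacePDF_Iic (neg_lt_of_abs_lt hu)).union
    (integrableOn_exp_mul_mul_laplacePDF_Ioi (lt_of_abs_lt hu))

lemma integral_exp_mul_mul_laplacePDF (hu : |u| < √2) :
    ∫ x, exp (u * x) * laplacePDF x = 2 / (2 - u ^ 2) := by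
  have hl : 0 < √2 + u := by linarith [neg_lt_of_abs_lt hu]
  have hr : u - √2 < 0 := by linarith [lt_of_abs_lt hu]
  rw [← intervalIntegral.integral_Iic_add_Ioi
    (integrableOn_exp_mul_mul_laplacePDF_Iic (neg_lt_of_abs_lt hu))
    (integrableOn_exp_mul_mul_laplacePDF_Ioi (lt_of_abs_lt hu)),
    setIntegral_congr_fun measurableSet_Iic fun _ hx => exp_mul_mul_laplacePDF_of_nonpos hx,
    setIntegral_congr_fun measurableSet_Ioi fun _ hx =>
      exp_mul_mul_laplacePDF_of_nonneg (le_of_lt hx),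
    integral_const_mul, integral_const_mul, integral_exp_mul_Iic hl, integral_exp_mul_Ioi hr]
  have h2 : √2 ^ 2 = 2 := sq_sqrt zero_le_two
  have h0 : 2 - u ^ 2 ≠ 0 := by nlinarith
  simp only [mul_zero, exp_zero]
  field_simp [hl.ne', hr.ne]
  linear_combination 2 * √2 * h2

lemma integrable_exp_mul_stdLaplace (hu : |u| < √2) :
    Integrable (fun x => exp (u * x)) stdLaplace := by
  rw [stdLaplace_eq_withDensity_laplacePDF, integrable_withDensity_iff
    continuous_laplacePDF.measurable.ennreal_ofReal (by simp)]
  simpa only [ENNReal.toReal_ofReal (laplacePDF_nonneg _)] using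
    integrable_exp_mul_mul_laplacePDF hu

lemma mgf_id_stdLaplace (hu : |u| < √2) : mgf id stdLaplace u = 2 / (2 - u ^ 2) := by
  rw [mgf, stdLaplace_eq_withDensity_laplacePDF, integral_withDensity_eq_integral_toReal_smul
    continuous_laplacePDF.measurable.ennreal_ofReal (by simp)]
  simp only [ENNReal.toReal_ofReal (laplacePDF_nonneg _), smul_eq_mul, id,
    mul_comm (laplacePDF _)]
  exact integral_exp_mul_mul_laplacePDF hu

lemma mgf_eq_of_map_eq_stdLaplace {Ω : Type*} [MeasurableSpace Ω] {P : Measure Ω} {X : Ω → ℝ}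
    (hX : Measurable X) (hlaw : P.map X = stdLaplace) (hu : |u| < √2) :
    mgf X P u = 2 / (2 - u ^ 2) := by
  rw [← mgf_id_map hX.aemeasurable, hlaw, mgf_id_stdLaplace hu]

lemma integrable_exp_mul_of_map_eq_stdLaplace {Ω : Type*} [MeasurableSpace Ω] {P : Measure Ω}
    {X : Ω → ℝ} (hX : Measurable X) (hlaw : P.map X = stdLaplace) (hu : |u| < √2) :
    Integrable (fun ω => exp (u * X ω)) P :=
  (integrable_map_measure (g := fun x => exp (u * x)) (by fun_prop) hX.aemeasurable).mp
    (hlaw ▸ integrable_exp_mul_stdLaplace hu)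

end StdLaplace

lemma exp_sum_abs_le_sum_powerset {ι : Type*} [DecidableEq ι] (J : Finset ι) (a : ι → ℝ) :
    exp (∑ j ∈ J, |a j|) ≤
      ∑ T ∈ J.powerset, exp (∑ j ∈ J, (if j ∈ T then 1 else -1) * a j) :=
  calc exp (∑ j ∈ J, |a j|) = ∏ j ∈ J, exp |a j| := exp_sum _ _
    _ ≤ ∏ j ∈ J, (exp (a j) + exp (-a j)) :=
      prod_le_prod (fun _ _ => (exp_pos _).le) fun j _ => exp_abs_le (a j)
    _ = ∑ T ∈ J.powerset, (∏ j ∈ T, exp (a j)) * ∏ j ∈ J \ T, exp (-a j) := prod_add _ _ _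
    _ = ∑ T ∈ J.powerset, exp (∑ j ∈ J, (if j ∈ T then 1 else -1) * a j) := by
      refine sum_congr rfl fun T hT => ?_
      rw [← exp_sum, ← exp_sum, ← exp_add, ← sum_sdiff (mem_powerset.mp hT), add_comm]
      congr 2
      · exact sum_congr rfl fun j hj => by simp [(Finset.mem_sdiff.mp hj).2]
      · exact sum_congr rfl fun j hj => by simp [hj]

namespace ProbabilityTheory

variable {Ω ι : Type*} [MeasurableSpace Ω] {P : Measure Ω} {X : ι → Ω → ℝ}

lemma iIndepFun.mgf_sum_mul (h : iIndepFun X P) (hX : ∀ i, Measurable (X i)) (c : ι → ℝ)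
    (s : Finset ι) (t : ℝ) :
    mgf (fun ω => ∑ i ∈ s, c i * X i ω) P t = ∏ i ∈ s, mgf (X i) P (c i * t) := by
  have hcX : iIndepFun (fun i ω => c i * X i ω) P :=
    h.comp (fun i x => c i * x) fun i => measurable_const_mul (c i)
  simpa only [Finset.sum_fn, mgf_const_mul] using
    hcX.mgf_sum (fun i => (hX i).const_mul (c i)) s (t := t)

lemma iIndepFun.integrable_exp_mul_sum_mul [IsFiniteMeasure P] (h : iIndepFun X P)
    (hX : ∀ i, Measurable (X i)) (c : ι → ℝ) {s : Finset ι} {t : ℝ}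
    (hint : ∀ i ∈ s, Integrable (fun ω => exp (c i * t * X i ω)) P) :
    Integrable (fun ω => exp (t * ∑ i ∈ s, c i * X i ω)) P := by
  have hcX : iIndepFun (fun i ω => c i * X i ω) P :=
    h.comp (fun i x => c i * x) fun i => measurable_const_mul (c i)
  simpa only [Finset.sum_fn, Finset.sum_apply, mul_left_comm t, mul_assoc] using
    hcX.integrable_exp_mul_sum (fun i => (hX i).const_mul (c i)) fun i hi => by
      simpa only [mul_left_comm t, mul_assoc] using hint i hi

end ProbabilityTheory

lemma two_div_two_sub_inv_pow_le_two {n : ℕ} (hn : n ≠ 0) : (2 / (2 - (n : ℝ)⁻¹)) ^ n ≤ 2 := by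
  have hn1 : (1 : ℝ) ≤ n := Nat.one_le_cast.mpr (Nat.pos_of_ne_zero hn)
  have hx : -2 ≤ -(2 * (n : ℝ))⁻¹ := by
    have := inv_le_one_of_one_le₀ (by linarith : (1 : ℝ) ≤ 2 * n)
    linarith
  have hbernoulli : 1 / 2 ≤ (1 + -(2 * (n : ℝ))⁻¹) ^ n :=
    calc (1 : ℝ) / 2 = 1 + n * -(2 * (n : ℝ))⁻¹ := by field_simp; ring
      _ ≤ _ := one_add_mul_le_pow hx n
  calc (2 / (2 - (n : ℝ)⁻¹)) ^ n = ((1 + -(2 * (n : ℝ))⁻¹) ^ n)⁻¹ := by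
        rw [← inv_pow]
        congr 1
        field_simp
        ring
    _ ≤ (1 / 2)⁻¹ := inv_anti₀ (by norm_num) hbernoulli
    _ = 2 := by norm_num

def sumAbsColumnSums {Ω : Type*} (ε : ℕ × ℕ → Ω → ℝ) (n K : ℕ) (ω : Ω) : ℝ :=
  ∑ j ∈ range K, |∑ i ∈ range n, ε (i, j) ω|

lemma measurable_sumAbsColumnSums {Ω : Type*} [MeasurableSpace Ω] {ε : ℕ × ℕ → Ω → ℝ}
    (hmeas : ∀ p, Measurable (ε p)) (n K : ℕ) : Measurable (sumAbsColumnSums ε n K) := by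
  unfold sumAbsColumnSums
  fun_prop

lemma exp_mul_sumAbsColumnSums_le_sum_powerset {Ω : Type*} (ε : ℕ × ℕ → Ω → ℝ) (n K : ℕ)
    {s : ℝ} (hs : 0 ≤ s) (ω : Ω) :
    exp (s * sumAbsColumnSums ε n K ω) ≤ ∑ T ∈ (range K).powerset,
      exp (s * ∑ p ∈ range n ×ˢ range K, (if p.2 ∈ T then 1 else -1) * ε p ω) := by
  calc exp (s * sumAbsColumnSums ε n K ω)
      = exp (∑ j ∈ range K, |s * ∑ i ∈ range n, ε (i, j) ω|) := by
        rw [sumAbsColumnSums, mul_sum]; simp only [abs_mul, abs_of_nonneg hs]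
    _ ≤ _ := exp_sum_abs_le_sum_powerset _ _
    _ = _ := by simp only [sum_product_right, mul_sum, mul_left_comm]

section SignedLaplaceSums

variable {Ω ι : Type*} [MeasurableSpace Ω] {P : Measure Ω} {X : ι → Ω → ℝ} {c : ι → ℝ} {t : ℝ}

lemma integrable_exp_mul_sum_mul_of_stdLaplace [IsFiniteMeasure P]
    (hmeas : ∀ i, Measurable (X i))
    (hlaw : ∀ i, P.map (X i) = stdLaplace) (hindep : iIndepFun X P) (hc : ∀ i, |c i| = 1)
    (s : Finset ι) (ht : |t| < √2) :
    Integrable (fun ω => exp (t * ∑ i ∈ s, c i * X i ω)) P :=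
  hindep.integrable_exp_mul_sum_mul hmeas c fun i _ =>
    integrable_exp_mul_of_map_eq_stdLaplace (hmeas i) (hlaw i) (by rwa [abs_mul, hc, one_mul])

lemma mgf_sum_mul_of_stdLaplace (hmeas : ∀ i, Measurable (X i))
    (hlaw : ∀ i, P.map (X i) = stdLaplace) (hindep : iIndepFun X P) (hc : ∀ i, |c i| = 1)
    (s : Finset ι) (ht : |t| < √2) :
    mgf (fun ω => ∑ i ∈ s, c i * X i ω) P t = (2 / (2 - t ^ 2)) ^ s.card := by
  rw [hindep.mgf_sum_mul hmeas, ← prod_const]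
  refine prod_congr rfl fun i _ => ?_
  rw [mgf_eq_of_map_eq_stdLaplace (hmeas i) (hlaw i) (by rwa [abs_mul, hc, one_mul]), mul_pow,
    ← sq_abs (c i), hc, one_pow, one_mul]

end SignedLaplaceSums

section LaplaceArray

variable {Ω : Type*} [MeasurableSpace Ω] {P : Measure Ω} [IsFiniteMeasure P]
  {ε : ℕ × ℕ → Ω → ℝ}

lemma mgf_sumAbsColumnSums_le_two_pow_mul (hmeas : ∀ p, Measurable (ε p))
    (hlaw : ∀ p, P.map (ε p) = stdLaplace) (hindep : iIndepFun ε P) (n K : ℕ) {s : ℝ}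
    (hs : 0 ≤ s) (hs_lt : s < √2) :
    Integrable (fun ω => exp (s * sumAbsColumnSums ε n K ω)) P ∧
      mgf (sumAbsColumnSums ε n K) P s ≤ 2 ^ K * (2 / (2 - s ^ 2)) ^ (n * K) := by
  have hs_abs : |s| < √2 := by rwa [abs_of_nonneg hs]
  have hsign : ∀ (T : Finset ℕ) (p : ℕ × ℕ), |(if p.2 ∈ T then 1 else -1 : ℝ)| = 1 := by
    intro T p
    split_ifs <;> simp
  set Y : Finset ℕ → Ω → ℝ :=
    fun T ω => ∑ p ∈ range n ×ˢ range K, (if p.2 ∈ T then 1 else -1) * ε p ω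
  have hYint : ∀ T, Integrable (fun ω => exp (s * Y T ω)) P := fun T =>
    integrable_exp_mul_sum_mul_of_stdLaplace hmeas hlaw hindep (hsign T) _ hs_abs
  have hYmgf : ∀ T, ∫ ω, exp (s * Y T ω) ∂P = (2 / (2 - s ^ 2)) ^ (n * K) := fun T => by
    change mgf (Y T) P s = _
    rw [mgf_sum_mul_of_stdLaplace hmeas hlaw hindep (hsign T) _ hs_abs, card_product,
      card_range, card_range]
  have hpointwise := exp_mul_sumAbsColumnSums_le_sum_powerset ε n K hs
  have hsumint : Integrable (fun ω => ∑ T ∈ (range K).powerset, exp (s * Y T ω)) P :=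
    integrable_finsetSum _ fun T _ => hYint T
  have hXint : Integrable (fun ω => exp (s * sumAbsColumnSums ε n K ω)) P :=
    hsumint.mono' ((measurable_sumAbsColumnSums hmeas n K).const_mul s).exp.aestronglyMeasurable
      (ae_of_all _ fun ω => by rw [norm_of_nonneg (exp_pos _).le]; exact hpointwise ω)
  refine ⟨hXint, ?_⟩
  calc mgf (sumAbsColumnSums ε n K) P s
      ≤ ∫ ω, ∑ T ∈ (range K).powerset, exp (s * Y T ω) ∂P :=
        integral_mono hXint hsumint hpointwise
    _ = 2 ^ K * (2 / (2 - s ^ 2)) ^ (n * K) := by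
      rw [integral_finsetSum _ fun T _ => hYint T, sum_congr rfl fun T _ => hYmgf T,
        sum_const, card_powerset, card_range, nsmul_eq_mul]
      push_cast
      ring

lemma mgf_sumAbsColumnSums_le (hmeas : ∀ p, Measurable (ε p))
    (hlaw : ∀ p, P.map (ε p) = stdLaplace) (hindep : iIndepFun ε P) {n : ℕ} (hn : n ≠ 0)
    (K : ℕ) :
    Integrable (fun ω => exp ((√n)⁻¹ * sumAbsColumnSums ε n K ω)) P ∧
      mgf (sumAbsColumnSums ε n K) P (√n)⁻¹ ≤ 4 ^ K := by
  have hn1 : (1 : ℝ) ≤ n := Nat.one_le_cast.mpr (Nat.pos_of_ne_zero hn)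
  have hs_lt : (√n)⁻¹ < √2 :=
    (inv_le_one_of_one_le₀ (one_le_sqrt.mpr hn1)).trans_lt (by rw [lt_sqrt zero_le_one]; norm_num)
  obtain ⟨hint, hmgf⟩ :=
    mgf_sumAbsColumnSums_le_two_pow_mul hmeas hlaw hindep n K (by positivity) hs_lt
  refine ⟨hint, hmgf.trans ?_⟩
  have : (n : ℝ)⁻¹ < 2 := (inv_le_one_of_one_le₀ hn1).trans_lt one_lt_two
  calc 2 ^ K * (2 / (2 - (√n)⁻¹ ^ 2)) ^ (n * K)
      = 2 ^ K * ((2 / (2 - (n : ℝ)⁻¹)) ^ n) ^ K := by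
        rw [inv_pow, sq_sqrt (Nat.cast_nonneg n), pow_mul]
    _ ≤ 2 ^ K * 2 ^ K := by
      gcongr
      exact two_div_two_sub_inv_pow_le_two hn
    _ = 4 ^ K := by rw [← mul_pow]; norm_num

lemma measureReal_le_sumAbsColumnSums_le (hmeas : ∀ p, Measurable (ε p))
    (hlaw : ∀ p, P.map (ε p) = stdLaplace) (hindep : iIndepFun ε P) {n : ℕ} (hn : n ≠ 0)
    (K : ℕ) (t : ℝ) :
    P.real {ω | n * t ≤ sumAbsColumnSums ε n K ω} ≤ exp (-(√n * t)) * 4 ^ K := by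
  obtain ⟨hint, hmgf⟩ := mgf_sumAbsColumnSums_le hmeas hlaw hindep hn K
  calc P.real {ω | n * t ≤ sumAbsColumnSums ε n K ω}
      ≤ exp (-(√n)⁻¹ * (n * t)) * mgf (sumAbsColumnSums ε n K) P (√n)⁻¹ :=
        measure_ge_le_exp_mul_mgf _ (by positivity) hint
    _ ≤ exp (-(√n)⁻¹ * (n * t)) * 4 ^ K := by gcongr
    _ = exp (-(√n * t)) * 4 ^ K := by
      rw [neg_mul, ← mul_assoc, inv_mul_eq_div, div_sqrt]

end LaplaceArray

lemma exp_neg_mul_mul_four_pow_le {a t : ℝ} {K : ℕ} (ha : 0 < a)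
    (hK : (K : ℝ) / a < t / (2 * log 4)) :
    exp (-(a * t)) * 4 ^ K ≤ exp (-(t / 2 * a)) := by
  have hlog : 0 < log 4 := log_pos (by norm_num)
  have hKa : K * log 4 ≤ t / 2 * a := by
    rw [div_lt_div_iff₀ ha (by positivity)] at hK
    nlinarith
  rw [← exp_log (by norm_num : (0 : ℝ) < 4), ← exp_nat_mul, ← exp_add]
  exact exp_le_exp.mpr (by linarith)

lemma summable_exp_neg_mul_sqrt {a : ℝ} (ha : 0 < a) :
    Summable fun n : ℕ => exp (-(a * √n)) := by
  refine ((summable_nat_pow_inv.mpr one_lt_two).mul_left (4 ! / a ^ 4))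
    |>.of_norm_bounded_eventually_nat ?_
  filter_upwards [eventually_ne_atTop 0] with n hn
  have hn' : (0 : ℝ) < n := by positivity
  have hpos : 0 < (a * √n) ^ 4 / 4 ! := by positivity
  rw [norm_of_nonneg (exp_pos _).le, exp_neg]
  calc (exp (a * √n))⁻¹ ≤ ((a * √n) ^ 4 / 4 !)⁻¹ :=
        inv_anti₀ hpos (pow_div_factorial_le_exp _ (by positivity) 4)
    _ = 4 ! / a ^ 4 * ((n : ℝ) ^ 2)⁻¹ := by
      rw [mul_pow, show (4 : ℕ) = 2 * 2 from rfl, pow_mul (√n), sq_sqrt hn'.le]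
      field_simp

lemma ae_tendsto_zero_of_summable_measureReal {Ω E : Type*} [MeasurableSpace Ω]
    [SeminormedAddCommGroup E] {μ : Measure Ω} [IsFiniteMeasure μ] {F : ℕ → Ω → E}
    (hF : ∀ t > 0, Summable fun n => μ.real {ω | t ≤ ‖F n ω‖}) :
    ∀ᵐ ω ∂μ, Tendsto (fun n => F n ω) atTop (𝓝 0) := by
  have h : ∀ m : ℕ, ∀ᵐ ω ∂μ, ∀ᶠ n in atTop, ‖F n ω‖ < 1 / (m + 1) := fun m => by
    have hfin : ∑' n, μ {ω | 1 / (m + 1) ≤ ‖F n ω‖} ≠ ∞ := by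
      have := (hF (1 / (m + 1)) Nat.one_div_pos_of_nat).tsum_ofReal_ne_top
      rwa [tsum_congr fun n => ofReal_measureReal (measure_ne_top μ _)] at this
    filter_upwards [ae_eventually_notMem hfin] with ω hω
    filter_upwards [hω] with n hn using not_le.mp hn
  filter_upwards [ae_all_iff.mpr h] with ω hω
  refine NormedAddGroup.tendsto_nhds_zero.mpr fun δ hδ => ?_
  obtain ⟨m, hm⟩ := exists_nat_one_div_lt hδ
  filter_upwards [hω m] with n hn using hn.trans hm

theorem laplace_array_strong_law_general
    {Ω : Type*} [MeasurableSpace Ω] (P : Measure Ω) [IsProbabilityMeasure P]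
    (ε : ℕ × ℕ → Ω → ℝ) (hmeas : ∀ p, Measurable (ε p))
    (hlaw : ∀ p, P.map (ε p) = stdLaplace)
    (hindep : ProbabilityTheory.iIndepFun ε P)
    (k : ℕ → ℕ)
    (hk_sqrt : Tendsto (fun n : ℕ => (k n : ℝ) / Real.sqrt n) atTop (nhds 0)) :
    ∀ᵐ ω ∂P, Tendsto
      (fun n : ℕ => ∑ j ∈ Finset.range (k n), |(n : ℝ)⁻¹ * ∑ i ∈ Finset.range n, ε (i, j) ω|)
      atTop (nhds 0) := by
  refine ae_tendsto_zero_of_summable_measureReal fun t ht => ?_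
  refine (summable_exp_neg_mul_sqrt (half_pos ht)).of_norm_bounded_eventually_nat ?_
  filter_upwards [eventually_ne_atTop 0,
    hk_sqrt.eventually_lt_const (by positivity : 0 < t / (2 * log 4))] with n hn hkn
  have hsub : ∀ ω, t ≤ ‖∑ j ∈ range (k n), |(n : ℝ)⁻¹ * ∑ i ∈ range n, ε (i, j) ω|‖ →
      n * t ≤ sumAbsColumnSums ε n (k n) ω := fun ω hω => by
    rw [norm_of_nonneg (sum_nonneg fun _ _ => abs_nonneg _)] at hω
    rw [← le_inv_mul_iff₀ (by positivity), sumAbsColumnSums, mul_sum]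
    simpa only [abs_mul, abs_inv, Nat.abs_cast] using hω
  rw [norm_of_nonneg measureReal_nonneg]
  calc _ ≤ P.real {ω | n * t ≤ sumAbsColumnSums ε n (k n) ω} := measureReal_mono hsub
    _ ≤ exp (-(√n * t)) * 4 ^ k n :=
      measureReal_le_sumAbsColumnSums_le hmeas hlaw hindep hn _ t
    _ ≤ exp (-(t / 2 * √n)) := exp_neg_mul_mul_four_pow_le (by positivity) hkn

/-- If `(ε_{i,j})_{i,j ≥ 1}` is a doubly indexed i.i.d. family of standard
Laplace random variables and `(k_n)` are integers with `k_n ≥ 2` and `k_n/√n → 0`, then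
`Σ_{j=1}^{k_n} |(1/n) Σ_{i=1}^n ε_{i,j}| → 0` almost surely. -/
theorem laplace_array_strong_law
    {Ω : Type*} [MeasurableSpace Ω] (P : Measure Ω) [IsProbabilityMeasure P]
    (ε : ℕ × ℕ → Ω → ℝ) (hmeas : ∀ p, Measurable (ε p))
    (hlaw : ∀ p, P.map (ε p) = stdLaplace)
    (hindep : ProbabilityTheory.iIndepFun ε P)
    (k : ℕ → ℕ) (hk : ∀ n, 2 ≤ k n)
    (hk_sqrt : Tendsto (fun n : ℕ => (k n : ℝ) / Real.sqrt n) atTop (nhds 0)) :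
    ∀ᵐ ω ∂P, Tendsto
      (fun n : ℕ => ∑ j ∈ Finset.range (k n), |(n : ℝ)⁻¹ * ∑ i ∈ Finset.range n, ε (i, j) ω|)
      atTop (nhds 0) :=
  laplace_array_strong_law_general P ε hmeas hlaw hindep k hk_sqrt
end

section
/- Let (X_1, Y_1), …, (X_n, Y_n) be i.i.d. copies of a random pair (X, Y), where X takes values in a measurable space 𝒳 with distribution μ and Y takes values in {−1, +1}, let A_1, …, A_k be pairwise disjoint measurable subsets of 𝒳, let σ_Z > 0, and let (ε_{i,j})_{1 ≤ i ≤ n, 1 ≤ j ≤ k} be i.i.d. standard Laplace random variables independent of the sample. With ν(A_j) = E[Y·1{X ∈ A_j}] and ν̃_n(A_j) = (1/n) Σ_{i=1}^n ( Y_i·1{X_i ∈ A_j} + σ_Z ε_{i,j} ), one has Σ_{j=1}^k P(|ν̃_n(A_j) − ν(A_j)| ≥ |ν(A_j)|)·|ν(A_j)| ≤ (1/√n) Σ_{j=1}^k √(σ_Z² + μ(A_j)) ≤ (k/√n)·√(σ_Z² + 1/k). -/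
open MeasureTheory Set

/-!
The privatised cell mean `ν̃_n(A_j)` is the average of the `n` pairwise independent variables
`Y_i 1{X_i ∈ A_j} + σ_Z ε_{i,j}`, each with mean `ν(A_j)` (the Laplace noise is centred) and
variance at most `μ(A_j) + σ_Z²` (as `Y² = 1` and `Var ε = 1`). Chebyshev's inequality at level
`c = |ν(A_j)|`, together with the trivial bound `P ≤ 1` when `c` is below the standard deviation,
gives `P(|ν̃_n(A_j) − ν(A_j)| ≥ c) · c ≤ √Var ν̃_n(A_j) ≤ √((σ_Z² + μ(A_j)) / n)`. The second
inequality is Cauchy–Schwarz, `Σ_j √(σ_Z² + μ(A_j)) ≤ √(k Σ_j (σ_Z² + μ(A_j))) ≤ √(k (k σ_Z² + 1))`,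
since the cells are disjoint.
-/

open Real ProbabilityTheory

theorem integrableOn_pow_mul_exp_neg_mul_Ioi (m : ℕ) {b : ℝ} (hb : 0 < b) :
    IntegrableOn (fun t : ℝ => t ^ m * exp (-(b * t))) (Ioi 0) := by
  refine (integrableOn_rpow_mul_exp_neg_mul_rpow (s := m)
    (by linarith [m.cast_nonneg (α := ℝ)]) one_pos hb).congr_fun
    (fun t _ => ?_) measurableSet_Ioi
  simp [Real.rpow_natCast]

theorem integral_pow_mul_exp_neg_mul_Ioi (m : ℕ) {b : ℝ} (hb : 0 < b) :
    ∫ t in Ioi (0 : ℝ), t ^ m * exp (-(b * t)) = m.factorial / b ^ (m + 1) := by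
  have h := integral_rpow_mul_exp_neg_mul_Ioi (a := m + 1) (by positivity) hb
  rw [add_sub_cancel_right, Real.Gamma_nat_eq_factorial, ← Nat.cast_succ, Real.rpow_natCast,
    one_div_pow, one_div_mul_eq_div] at h
  rw [← h]
  exact setIntegral_congr_fun measurableSet_Ioi fun t _ => by simp [Real.rpow_natCast]

theorem integrable_comp_abs_of_integrableOn_Ioi {f : ℝ → ℝ} (hf : IntegrableOn f (Ioi 0)) :
    Integrable fun x => f |x| := by
  have h_Ioi : IntegrableOn (fun x => f |x|) (Ioi 0) :=
    hf.congr_fun (fun x hx => by rw [abs_of_pos hx]) measurableSet_Ioi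
  have h_Iic : IntegrableOn (fun x => f |x|) (Iic 0) := by
    have hneg : MeasurableEmbedding fun x : ℝ => -x := (Homeomorph.neg ℝ).measurableEmbedding
    rw [← Measure.map_neg_eq_self (volume : Measure ℝ), hneg.integrableOn_map_iff]
    simp_rw [Function.comp_def, abs_neg, neg_preimage, neg_Iic, neg_zero]
    exact (integrableOn_Ici_iff_integrableOn_Ioi (μ := volume)).mpr h_Ioi
  simpa using h_Iic.union h_Ioi

noncomputable def laplaceDensity (x : ℝ) : ℝ := (√2)⁻¹ * exp (-(√2 * |x|))

theorem laplaceDensity_nonneg (x : ℝ) : 0 ≤ laplaceDensity x := by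
  unfold laplaceDensity; positivity

theorem measurable_laplaceDensity : Measurable laplaceDensity := by
  unfold laplaceDensity; fun_prop

theorem integrable_abs_pow_mul_laplaceDensity (m : ℕ) :
    Integrable fun x => |x| ^ m * laplaceDensity x := by
  refine integrable_comp_abs_of_integrableOn_Ioi
    (f := fun t => (√2)⁻¹ * (t ^ m * exp (-(√2 * t)))) ?_ |>.congr (.of_forall fun x => ?_)
  · exact (integrableOn_pow_mul_exp_neg_mul_Ioi m (by positivity)).const_mul _
  · simp only [laplaceDensity]; ring

theorem integral_abs_pow_mul_laplaceDensity (m : ℕ) :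
    ∫ x, |x| ^ m * laplaceDensity x = m.factorial / √2 ^ m := by
  calc ∫ x, |x| ^ m * laplaceDensity x
      = ∫ x, (fun t => (√2)⁻¹ * (t ^ m * exp (-(√2 * t)))) |x| := by
        congr 1; ext x; simp only [laplaceDensity]; ring
    _ = 2 * ((√2)⁻¹ * (m.factorial / √2 ^ (m + 1))) := by
        rw [integral_comp_abs (f := fun t => (√2)⁻¹ * (t ^ m * exp (-(√2 * t)))),
          integral_const_mul,
          integral_pow_mul_exp_neg_mul_Ioi m (by positivity)]
    _ = m.factorial / √2 ^ m := by
        rw [pow_succ]; field_simp; norm_num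

theorem stdLaplace_eq_withDensity :
    stdLaplace = volume.withDensity fun x => ENNReal.ofReal (laplaceDensity x) := rfl

instance : IsProbabilityMeasure stdLaplace := by
  have h := integral_abs_pow_mul_laplaceDensity 0
  simp only [pow_zero, one_mul, Nat.factorial_zero, Nat.cast_one, div_one] at h
  have hint := integrable_abs_pow_mul_laplaceDensity 0
  simp only [pow_zero, one_mul] at hint
  constructor
  rw [stdLaplace_eq_withDensity, withDensity_apply _ MeasurableSet.univ, Measure.restrict_univ,
    ← ofReal_integral_eq_lintegral_ofReal hint (.of_forall laplaceDensity_nonneg), h,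
    ENNReal.ofReal_one]

theorem integral_stdLaplace (g : ℝ → ℝ) :
    ∫ x, g x ∂stdLaplace = ∫ x, laplaceDensity x * g x := by
  rw [stdLaplace_eq_withDensity, integral_withDensity_eq_integral_toReal_smul
    measurable_laplaceDensity.ennreal_ofReal (.of_forall fun _ => ENNReal.ofReal_lt_top)]
  simp [ENNReal.toReal_ofReal (laplaceDensity_nonneg _)]

theorem memLp_id_stdLaplace : MemLp id 2 stdLaplace := by
  rw [memLp_two_iff_integrable_sq aestronglyMeasurable_id, stdLaplace_eq_withDensity,
    integrable_withDensity_iff measurable_laplaceDensity.ennreal_ofReal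
      (.of_forall fun _ => ENNReal.ofReal_lt_top)]
  simpa [ENNReal.toReal_ofReal (laplaceDensity_nonneg _)] using
    integrable_abs_pow_mul_laplaceDensity 2

theorem integral_id_stdLaplace : ∫ x, x ∂stdLaplace = 0 := by
  have hodd : ∫ x, laplaceDensity x * x = -∫ x, laplaceDensity x * x := by
    rw [← integral_neg]
    conv_lhs => rw [← integral_neg_eq_self]
    simp [laplaceDensity]
  rw [integral_stdLaplace]
  linarith

theorem variance_id_stdLaplace : Var[id; stdLaplace] = 1 := by
  rw [variance_of_integral_eq_zero aemeasurable_id integral_id_stdLaplace, integral_stdLaplace]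
  simpa [mul_comm] using integral_abs_pow_mul_laplaceDensity 2

namespace ProbabilityTheory

variable {Ω : Type*} [MeasurableSpace Ω] {P : Measure Ω}

theorem HasLaw.memLp_comp {α : Type*} [MeasurableSpace α] {μ : Measure α} {X : Ω → α}
    (hX : HasLaw X μ P) {f : α → ℝ} {p : ENNReal} (hf : MemLp f p μ) : MemLp (f ∘ X) p P :=
  (hX.map_eq ▸ hf).comp_of_map hX.aemeasurable

theorem HasLaw.variance_comp {α : Type*} [MeasurableSpace α] {μ : Measure α} {X : Ω → α}
    (hX : HasLaw X μ P) {f : α → ℝ} (hf : AEMeasurable f μ) : Var[f ∘ X; P] = Var[f; μ] := by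
  rw [← hX.map_eq, variance_map (hX.map_eq ▸ hf) hX.aemeasurable]

section StdLaplaceNoise

variable {ε : Ω → ℝ}

theorem HasLaw.memLp_two_of_stdLaplace (hε : HasLaw ε stdLaplace P) : MemLp ε 2 P :=
  hε.memLp_comp memLp_id_stdLaplace

theorem HasLaw.integral_eq_zero_of_stdLaplace (hε : HasLaw ε stdLaplace P) : P[ε] = 0 := by
  rw [hε.integral_eq, integral_id_stdLaplace]

theorem HasLaw.variance_eq_one_of_stdLaplace (hε : HasLaw ε stdLaplace P) :
    Var[ε; P] = 1 := by
  rw [hε.variance_eq, variance_id_stdLaplace]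

end StdLaplaceNoise

theorem iIndepFun.sumElim_comp {ι κ α β γ : Type*} [MeasurableSpace α] [MeasurableSpace β]
    [MeasurableSpace γ] {X : ι → Ω → α} {Y : κ → Ω → β}
    (h : iIndepFun (Sum.elim (fun i ω => (Sum.inl (X i ω) : α ⊕ β)) fun p ω => Sum.inr (Y p ω)) P)
    {f : α → γ} {g : β → γ} (hf : Measurable f) (hg : Measurable g) :
    iIndepFun (Sum.elim (fun i ω => f (X i ω)) fun p ω => g (Y p ω)) P := by
  convert h.comp (fun _ => Sum.elim f g) fun _ => hf.sumElim hg using 1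
  ext (i | p) ω <;> rfl

theorem iIndepFun.pairwise_indepFun_add_sumElim {ι κ : Type*} {U : ι → Ω → ℝ} {V : κ → Ω → ℝ}
    (h : iIndepFun (Sum.elim U V) P) (hU : ∀ i, Measurable (U i)) (hV : ∀ p, Measurable (V p))
    {e : ι → κ} (he : Function.Injective e) :
    Pairwise fun i j => (fun ω => U i ω + V (e i) ω) ⟂ᵢ[P] fun ω => U j ω + V (e j) ω :=
  fun i j hij => h.indepFun_add_add (fun | .inl i => hU i | .inr p => hV p)
    (.inl i) (.inr (e i)) (.inl j) (.inr (e j))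
    (by simpa using hij) (by simp) (by simp) (by simpa using he.ne hij)

theorem measureReal_le_abs_sub_integral_mul_le_sqrt_variance [IsProbabilityMeasure P]
    {X : Ω → ℝ} (hX : MemLp X 2 P) {c : ℝ} (hc : 0 ≤ c) :
    P.real {ω | c ≤ |X ω - P[X]|} * c ≤ √Var[X; P] := by
  rcases le_or_gt c √Var[X; P] with hle | hlt
  · exact (mul_le_of_le_one_left hc measureReal_le_one).trans hle
  have hc_pos : 0 < c := (sqrt_nonneg _).trans_lt hlt
  have hcheb : P.real {ω | c ≤ |X ω - P[X]|} ≤ Var[X; P] / c ^ 2 :=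
    ENNReal.toReal_le_of_le_ofReal (div_nonneg (variance_nonneg X P) (sq_nonneg c))
      (meas_ge_le_variance_div_sq hX hc_pos)
  calc P.real {ω | c ≤ |X ω - P[X]|} * c
      ≤ Var[X; P] / c ^ 2 * c := by gcongr
    _ = √Var[X; P] * √Var[X; P] / c := by
        rw [mul_self_sqrt (variance_nonneg X P)]; field_simp
    _ ≤ √Var[X; P] * c / c := by gcongr
    _ = √Var[X; P] := by field_simp

theorem integral_sampleMean {n : ℕ} (hn : 0 < n) {T : Fin n → Ω → ℝ}
    (hT : ∀ i, Integrable (T i) P) {m : ℝ} (hm : ∀ i, P[T i] = m) :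
    P[fun ω => (n : ℝ)⁻¹ * ∑ i, T i ω] = m := by
  rw [integral_const_mul, integral_finsetSum _ fun i _ => hT i]
  simp only [hm, Finset.sum_const, Finset.card_univ, Fintype.card_fin, nsmul_eq_mul]
  field_simp

theorem variance_sampleMean_le {n : ℕ} {T : Fin n → Ω → ℝ} (hT : ∀ i, MemLp (T i) 2 P)
    (hindep : Pairwise fun i j => T i ⟂ᵢ[P] T j) {v : ℝ} (hv : ∀ i, Var[T i; P] ≤ v) :
    Var[fun ω => (n : ℝ)⁻¹ * ∑ i, T i ω; P] ≤ v / n := by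
  have hsum : Var[fun ω => ∑ i, T i ω; P] = ∑ i, Var[T i; P] := by
    rw [← IndepFun.variance_sum (fun i _ => hT i) fun i _ j _ hij => hindep hij]
    congr 1; ext ω; simp
  calc Var[fun ω => (n : ℝ)⁻¹ * ∑ i, T i ω; P]
      = (n : ℝ)⁻¹ ^ 2 * ∑ i, Var[T i; P] := by rw [variance_const_mul, hsum]
    _ ≤ (n : ℝ)⁻¹ ^ 2 * (n * v) := by
        gcongr
        simpa using Finset.sum_le_sum fun i (_ : i ∈ Finset.univ) => hv i
    _ = v / n := by
        rcases n.eq_zero_or_pos with rfl | hn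
        · simp
        · field_simp

theorem measureReal_le_abs_sampleMean_sub_mul_le [IsProbabilityMeasure P] {n : ℕ} (hn : 0 < n)
    {T : Fin n → Ω → ℝ} (hT : ∀ i, MemLp (T i) 2 P)
    (hindep : Pairwise fun i j => T i ⟂ᵢ[P] T j) {m v : ℝ} (hm : ∀ i, P[T i] = m)
    (hv : ∀ i, Var[T i; P] ≤ v) {c : ℝ} (hc : 0 ≤ c) :
    P.real {ω | c ≤ |(n : ℝ)⁻¹ * ∑ i, T i ω - m|} * c ≤ √(v / n) := by
  have hmean := integral_sampleMean hn (fun i => (hT i).integrable one_le_two) hm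
  have hmemLp : MemLp (fun ω => (n : ℝ)⁻¹ * ∑ i, T i ω) 2 P :=
    (memLp_finsetSum _ fun i _ => hT i).const_mul _
  have hcheb := measureReal_le_abs_sub_integral_mul_le_sqrt_variance hmemLp hc
  rw [hmean] at hcheb
  exact hcheb.trans (sqrt_le_sqrt (variance_sampleMean_le hT hindep hv))

theorem measureReal_le_abs_privateMean_sub_mul_le [IsProbabilityMeasure P] {n : ℕ} (hn : 0 < n)
    {W ε : Fin n → Ω → ℝ} (hW : ∀ i, MemLp (W i) 2 P) {m a : ℝ} (hWm : ∀ i, P[W i] = m)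
    (hWv : ∀ i, Var[W i; P] ≤ a) (hε : ∀ i, HasLaw (ε i) stdLaplace P) (σ : ℝ)
    (hWε : ∀ i, W i ⟂ᵢ[P] fun ω => σ * ε i ω)
    (hindep : Pairwise fun i j =>
      (fun ω => W i ω + σ * ε i ω) ⟂ᵢ[P] fun ω => W j ω + σ * ε j ω)
    {c : ℝ} (hc : 0 ≤ c) :
    P.real {ω | c ≤ |(n : ℝ)⁻¹ * ∑ i, (W i ω + σ * ε i ω) - m|} * c ≤ √((σ ^ 2 + a) / n) := by
  have hnoise : ∀ i, MemLp (fun ω => σ * ε i ω) 2 P :=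
    fun i => (hε i).memLp_two_of_stdLaplace.const_mul σ
  refine measureReal_le_abs_sampleMean_sub_mul_le (T := fun i ω => W i ω + σ * ε i ω) hn
    (fun i => (hW i).add (hnoise i)) hindep
    (fun i => ?_) (fun i => ?_) hc
  · rw [integral_add ((hW i).integrable one_le_two) ((hnoise i).integrable one_le_two),
      integral_const_mul, (hε i).integral_eq_zero_of_stdLaplace, hWm i, mul_zero, add_zero]
  · rw [(hWε i).variance_fun_add (hW i) (hnoise i), variance_const_mul,
      (hε i).variance_eq_one_of_stdLaplace, mul_one, add_comm]
    exact add_le_add_right (hWv i) _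

end ProbabilityTheory

section SignedIndicator

variable {𝒳 : Type*} {A : Set 𝒳}

noncomputable def signedIndicator (A : Set 𝒳) (q : 𝒳 × ℝ) : ℝ :=
  q.2 * A.indicator (fun _ => 1) q.1

theorem sq_signedIndicator_le {q : 𝒳 × ℝ} (hq : |q.2| ≤ 1) :
    signedIndicator A q ^ 2 ≤ {q : 𝒳 × ℝ | q.1 ∈ A}.indicator 1 q := by
  by_cases hA : q.1 ∈ A
  · simpa [signedIndicator, hA, sq_le_one_iff_abs_le_one] using hq
  · simp [signedIndicator, hA]

variable [MeasurableSpace 𝒳] {lam : Measure (𝒳 × ℝ)}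

theorem measurable_signedIndicator (hA : MeasurableSet A) : Measurable (signedIndicator A) :=
  measurable_snd.mul ((measurable_const.indicator hA).comp measurable_fst)

theorem integral_signedIndicator (hA : MeasurableSet A) :
    ∫ q, signedIndicator A q ∂lam = ∫ q in {q | q.1 ∈ A}, q.2 ∂lam := by
  rw [← integral_indicator (show MeasurableSet {q : 𝒳 × ℝ | q.1 ∈ A} from measurable_fst hA)]
  congr 1; ext q
  by_cases hq : q.1 ∈ A <;> simp [signedIndicator, hq]

theorem memLp_signedIndicator [IsFiniteMeasure lam] (hA : MeasurableSet A)
    (hY : ∀ᵐ q ∂lam, |q.2| ≤ 1) : MemLp (signedIndicator A) 2 lam :=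
  MemLp.of_bound (measurable_signedIndicator hA).aestronglyMeasurable 1 <| hY.mono fun q hq => by
    by_cases hqA : q.1 ∈ A <;> simp [signedIndicator, hqA, hq]

theorem variance_signedIndicator_le [IsProbabilityMeasure lam] (hA : MeasurableSet A)
    (hY : ∀ᵐ q ∂lam, |q.2| ≤ 1) : Var[signedIndicator A; lam] ≤ (lam.map Prod.fst).real A := by
  have hA' : MeasurableSet {q : 𝒳 × ℝ | q.1 ∈ A} := measurable_fst hA
  calc Var[signedIndicator A; lam]
      ≤ lam[signedIndicator A ^ 2] :=
        variance_le_expectation_sq (measurable_signedIndicator hA).aestronglyMeasurable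
    _ ≤ ∫ q, {q : 𝒳 × ℝ | q.1 ∈ A}.indicator 1 q ∂lam :=
        integral_mono_ae (f := signedIndicator A ^ 2) (memLp_signedIndicator hA hY).integrable_sq
          ((integrable_const 1).indicator hA') (hY.mono fun q hq => sq_signedIndicator_le hq)
    _ = (lam.map Prod.fst).real A := by
        rw [integral_indicator_one hA', map_measureReal_apply measurable_fst hA]; rfl

end SignedIndicator

theorem measureReal_le_abs_privateCellMean_sub_mul_le {Ω 𝒳 κ : Type*} [MeasurableSpace Ω]
    [MeasurableSpace 𝒳] {P : Measure Ω} [IsProbabilityMeasure P] {lam : Measure (𝒳 × ℝ)}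
    [IsProbabilityMeasure lam] (hY : ∀ᵐ q ∂lam, |q.2| ≤ 1) {n : ℕ} (hn : 0 < n)
    {D : Fin n → Ω → 𝒳 × ℝ} {ε : κ → Ω → ℝ} (hDm : ∀ i, Measurable (D i))
    (hεm : ∀ p, Measurable (ε p)) (hD : ∀ i, HasLaw (D i) lam P)
    (hε : ∀ p, HasLaw (ε p) stdLaplace P)
    (hindep : iIndepFun
      (Sum.elim (fun i ω => (Sum.inl (D i ω) : (𝒳 × ℝ) ⊕ ℝ)) fun p ω => Sum.inr (ε p ω)) P)
    {A : Set 𝒳} (hA : MeasurableSet A) (σ : ℝ) {e : Fin n → κ} (he : e.Injective)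
    {c : ℝ} (hc : 0 ≤ c) :
    P.real {ω | c ≤ |(n : ℝ)⁻¹ * ∑ i, (signedIndicator A (D i ω) + σ * ε (e i) ω)
      - ∫ q in {q | q.1 ∈ A}, q.2 ∂lam|} * c ≤ √((σ ^ 2 + (lam.map Prod.fst).real A) / n) := by
  have hφ := measurable_signedIndicator hA
  have hR : iIndepFun (Sum.elim (fun i ω => signedIndicator A (D i ω)) fun p ω => σ * ε p ω) P :=
    hindep.sumElim_comp hφ (measurable_const_mul σ)
  exact measureReal_le_abs_privateMean_sub_mul_le hn (W := fun i ω => signedIndicator A (D i ω))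
    (fun i => (hD i).memLp_comp (memLp_signedIndicator hA hY))
    (fun i => ((hD i).integral_comp hφ.aestronglyMeasurable).trans (integral_signedIndicator hA))
    (fun i => ((hD i).variance_comp hφ.aemeasurable).trans_le (variance_signedIndicator_le hA hY))
    (fun i => hε (e i)) σ (fun i => hR.indepFun Sum.inl_ne_inr)
    (hR.pairwise_indepFun_add_sumElim (fun i => hφ.comp (hDm i)) (fun p => (hεm p).const_mul σ) he)
    hc

theorem sqrt_mul_sqrt_mul_add_one (c : ℝ) {N : ℝ} (hN : 0 ≤ N) :
    √N * √(N * c + 1) = N * √(c + 1 / N) := by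
  rcases hN.eq_or_lt with rfl | hN
  · simp
  rw [← sqrt_mul hN.le, show N * √(c + 1 / N) = √(N ^ 2 * (c + 1 / N)) by
    rw [sqrt_mul (sq_nonneg N), sqrt_sq hN.le]]
  congr 1; field_simp

theorem sum_sqrt_add_le_card_mul_sqrt_add_inv {ι : Type*} (s : Finset ι) {c : ℝ} (hc : 0 ≤ c)
    {a : ι → ℝ} (ha : ∀ i, 0 ≤ a i) (hsum : ∑ i ∈ s, a i ≤ 1) :
    ∑ i ∈ s, √(c + a i) ≤ s.card * √(c + 1 / s.card) := by
  calc ∑ i ∈ s, √(c + a i) = ∑ i ∈ s, √1 * √(c + a i) := by simp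
    _ ≤ √(∑ i ∈ s, 1) * √(∑ i ∈ s, (c + a i)) :=
        sum_sqrt_mul_sqrt_le s (fun _ => zero_le_one) fun i => add_nonneg hc (ha i)
    _ ≤ √s.card * √(s.card * c + 1) := by
        rw [Finset.sum_add_distrib]
        gcongr <;> simp
    _ = s.card * √(c + 1 / s.card) := sqrt_mul_sqrt_mul_add_one c (Nat.cast_nonneg _)

theorem summed_chebyshev_private_cells_bound_general
    {𝒳 : Type*} [MeasurableSpace 𝒳]
    (lam : Measure (𝒳 × ℝ)) [IsProbabilityMeasure lam]
    (μ : Measure 𝒳) (hμ : μ = lam.map Prod.fst)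
    (hY : lam {p | p.2 = 1 ∨ p.2 = -1} = 1)
    {n k : ℕ} (hn : 0 < n)
    {Ω : Type*} [MeasurableSpace Ω] (P : Measure Ω) [IsProbabilityMeasure P]
    (Xdat : Fin n → Ω → 𝒳) (Ydat : Fin n → Ω → ℝ) (ε : Fin n × Fin k → Ω → ℝ)
    (hXmeas : ∀ i, Measurable (Xdat i)) (hYmeas : ∀ i, Measurable (Ydat i))
    (hεmeas : ∀ p, Measurable (ε p))
    (hlaw : ∀ i, P.map (fun ω => (Xdat i ω, Ydat i ω)) = lam)
    (hεlaw : ∀ p, P.map (ε p) = stdLaplace)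
    -- the sample pairs and all noise variables are jointly independent
    (hindep : ProbabilityTheory.iIndepFun
      (Sum.elim
        (fun i ω => (Sum.inl (Xdat i ω, Ydat i ω) : (𝒳 × ℝ) ⊕ ℝ))
        (fun p ω => Sum.inr (ε p ω))) P)
    (σZ : ℝ)
    (A : Fin k → Set 𝒳) (hA : ∀ j, MeasurableSet (A j))
    (hdisj : ∀ j j' : Fin k, j ≠ j' → Disjoint (A j) (A j'))
    (ν : Fin k → ℝ) (hν_def : ∀ j, ν j = ∫ p in {q : 𝒳 × ℝ | q.1 ∈ A j}, p.2 ∂lam) :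
    (∑ j : Fin k,
      (P {ω | |(n : ℝ)⁻¹ * (∑ i,
            (Ydat i ω * (A j).indicator (fun _ => (1 : ℝ)) (Xdat i ω) + σZ * ε (i, j) ω))
          - ν j| ≥ |ν j|}).toReal * |ν j|)
      ≤ (1 / Real.sqrt n) * ∑ j : Fin k, Real.sqrt (σZ ^ 2 + (μ (A j)).toReal) ∧
    (1 / Real.sqrt n) * (∑ j : Fin k, Real.sqrt (σZ ^ 2 + (μ (A j)).toReal))
      ≤ ((k : ℝ) / Real.sqrt n) * Real.sqrt (σZ ^ 2 + 1 / k) := by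
  have hμprob : IsProbabilityMeasure μ :=
    hμ ▸ Measure.isProbabilityMeasure_map measurable_fst.aemeasurable
  have hYbound : ∀ᵐ q ∂lam, |q.2| ≤ 1 := by
    have hsign : ∀ᵐ q ∂lam, q.2 = 1 ∨ q.2 = -1 :=
      (ae_iff_measure_eq (by measurability)).2 (by rw [hY, measure_univ])
    filter_upwards [hsign] with q hq
    rcases hq with hq | hq <;> simp [hq]
  have hcells : ∑ j, μ.real (A j) ≤ 1 :=
    (sum_measureReal_le_measureReal_univ (fun j _ => hA j) fun j _ j' _ => hdisj j j').trans
      measureReal_le_one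
  refine ⟨?_, ?_⟩
  · rw [Finset.mul_sum]
    refine Finset.sum_le_sum fun j _ => ?_
    have hcell := measureReal_le_abs_privateCellMean_sub_mul_le hYbound hn
      (fun i => (hXmeas i).prodMk (hYmeas i)) hεmeas
      (fun i => ⟨((hXmeas i).prodMk (hYmeas i)).aemeasurable, hlaw i⟩)
      (fun p => ⟨(hεmeas p).aemeasurable, hεlaw p⟩) hindep (hA j) σZ (Prod.mk_left_injective j)
      (abs_nonneg (ν j))
    rw [← hν_def j, ← hμ, sqrt_div' _ (Nat.cast_nonneg n), div_eq_inv_mul] at hcell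
    rwa [one_div]
  · calc (1 / √n) * ∑ j, √(σZ ^ 2 + μ.real (A j))
        ≤ (1 / √n) * (k * √(σZ ^ 2 + 1 / k)) := by
          gcongr
          simpa using sum_sqrt_add_le_card_mul_sqrt_add_inv Finset.univ (sq_nonneg σZ)
            (fun j => measureReal_nonneg) hcells
      _ = (k / √n) * √(σZ ^ 2 + 1 / k) := by ring

/-- Summed Chebyshev bound over pairwise disjoint cells for the privatised
empirical signed measures `ν̃_n(A_j) = (1/n) Σ_i (Y_i 1{X_i ∈ A_j} + σ_Z ε_{i,j})`:
`Σ_j P(|ν̃_n(A_j) − ν(A_j)| ≥ |ν(A_j)|)·|ν(A_j)| ≤ (1/√n) Σ_j √(σ_Z² + μ(A_j))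
  ≤ (k/√n)·√(σ_Z² + 1/k)`. -/
theorem summed_chebyshev_private_cells_bound
    {𝒳 : Type*} [MeasurableSpace 𝒳]
    (lam : Measure (𝒳 × ℝ)) [IsProbabilityMeasure lam]
    (μ : Measure 𝒳) (hμ : μ = lam.map Prod.fst)
    (hY : lam {p | p.2 = 1 ∨ p.2 = -1} = 1)
    {n k : ℕ} (hn : 0 < n) (hk : 0 < k)
    {Ω : Type*} [MeasurableSpace Ω] (P : Measure Ω) [IsProbabilityMeasure P]
    (Xdat : Fin n → Ω → 𝒳) (Ydat : Fin n → Ω → ℝ) (ε : Fin n × Fin k → Ω → ℝ)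
    (hXmeas : ∀ i, Measurable (Xdat i)) (hYmeas : ∀ i, Measurable (Ydat i))
    (hεmeas : ∀ p, Measurable (ε p))
    (hlaw : ∀ i, P.map (fun ω => (Xdat i ω, Ydat i ω)) = lam)
    (hεlaw : ∀ p, P.map (ε p) = stdLaplace)
    -- the sample pairs and all noise variables are jointly independent
    (hindep : ProbabilityTheory.iIndepFun
      (Sum.elim
        (fun i ω => (Sum.inl (Xdat i ω, Ydat i ω) : (𝒳 × ℝ) ⊕ ℝ))
        (fun p ω => Sum.inr (ε p ω))) P)
    (σZ : ℝ) (hσ : 0 < σZ)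
    (A : Fin k → Set 𝒳) (hA : ∀ j, MeasurableSet (A j))
    (hdisj : ∀ j j' : Fin k, j ≠ j' → Disjoint (A j) (A j'))
    (ν : Fin k → ℝ) (hν_def : ∀ j, ν j = ∫ p in {q : 𝒳 × ℝ | q.1 ∈ A j}, p.2 ∂lam) :
    (∑ j : Fin k,
      (P {ω | |(n : ℝ)⁻¹ * (∑ i,
            (Ydat i ω * (A j).indicator (fun _ => (1 : ℝ)) (Xdat i ω) + σZ * ε (i, j) ω))
          - ν j| ≥ |ν j|}).toReal * |ν j|)
      ≤ (1 / Real.sqrt n) * ∑ j : Fin k, Real.sqrt (σZ ^ 2 + (μ (A j)).toReal) ∧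
    (1 / Real.sqrt n) * (∑ j : Fin k, Real.sqrt (σZ ^ 2 + (μ (A j)).toReal))
      ≤ ((k : ℝ) / Real.sqrt n) * Real.sqrt (σZ ^ 2 + 1 / k) :=
  summed_chebyshev_private_cells_bound_general lam μ hμ hY hn P Xdat Ydat ε hXmeas hYmeas hεmeas
    hlaw hεlaw hindep σZ A hA hdisj ν hν_def
end
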